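/- arXiv:2110.09029 — 3 statements merged into one kernel-verified Lean document; each statement's English description precedes it below -/
import Mathlib

section
/- Let G be a finite group with a fixed-point-free automorphism α, and let N be a normal subgroup of G with α(N) = N. Then the induced automorphism on the quotient G/N is also fixed-point-free. -/
/-! The map `x ↦ x⁻¹ * α x` is injective, since `x⁻¹ * α x = y⁻¹ * α y` says exactly that
`y * x⁻¹` is fixed by `α`. As `N` is finite and `α`-invariant, this map restricts to a bijection
of `N`; so if `g⁻¹ * α g ∈ N` then it equals `n⁻¹ * α n` for some `n ∈ N`, and `g = n`. -/

namespace MonoidHom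

variable {G : Type*} [Group G] (f : G →* G)

theorem injective_inv_mul_apply_self (hf : ∀ g, f g = g → g = 1) :
    Function.Injective fun x => x⁻¹ * f x := by
  intro x y hxy
  have hfix : f (y * x⁻¹) = y * x⁻¹ := by
    rw [map_mul, map_inv, inv_mul_eq_iff_eq_mul.mp hxy]
    group
  exact (mul_inv_eq_one.mp (hf _ hfix)).symm

theorem exists_mem_inv_mul_apply_self_eq (hf : ∀ g, f g = g → g = 1) {N : Subgroup G}
    [Finite N] (hN : N.map f ≤ N) {h : G} (hh : h ∈ N) : ∃ n ∈ N, n⁻¹ * f n = h := by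
  have hmaps : Set.MapsTo (fun x => x⁻¹ * f x) (N : Set G) N := fun n hn =>
    N.mul_mem (N.inv_mem hn) (hN ⟨n, hn, rfl⟩)
  obtain ⟨⟨n, hn⟩, hnh⟩ := Finite.surjective_of_injective
    (hmaps.restrict_inj.mpr (f.injective_inv_mul_apply_self hf).injOn) ⟨h, hh⟩
  exact ⟨n, hn, congrArg Subtype.val hnh⟩

end MonoidHom

theorem stmt_1_general {G : Type*} [Group G] [Finite G] (α : G ≃* G)
    (hfpf : ∀ g : G, α g = g → g = 1)
    (N : Subgroup G) (hN : N.map α.toMonoidHom = N) :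
    ∀ g : G, g⁻¹ * α g ∈ N → g ∈ N := by
  intro g hg
  obtain ⟨n, hn, hng⟩ := α.toMonoidHom.exists_mem_inv_mul_apply_self_eq hfpf hN.le hg
  rwa [← α.toMonoidHom.injective_inv_mul_apply_self hfpf hng]

/-- If `α` is a fixed-point-free automorphism of a finite group `G` and `N` is a
normal `α`-invariant subgroup, then the induced automorphism on `G ⧸ N` is fixed-point-free,
i.e. `g⁻¹ * α g ∈ N → g ∈ N`. -/
theorem stmt_1 {G : Type*} [Group G] [Finite G] (α : G ≃* G)
    (hfpf : ∀ g : G, α g = g → g = 1)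
    (N : Subgroup G) [N.Normal] (hN : N.map α.toMonoidHom = N) :
    ∀ g : G, g⁻¹ * α g ∈ N → g ∈ N :=
  stmt_1_general α hfpf N hN
end

section
/- Let G be a finite group with a fixed-point-free automorphism α of order dividing n. Then α is n-split, i.e. for every g ∈ G, the product g · α(g) · α²(g) ⋯ αⁿ⁻¹(g) equals 1. -/
/-! Since `α` fixes only `1`, the map `g ↦ g⁻¹ * α g` is injective, hence surjective as `G` is
finite. For `g⁻¹ * α g` the product `∏ αⁱ(g⁻¹ * α g)` telescopes to `g⁻¹ * αⁿ g = 1`. -/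

namespace MulAut

variable {G : Type*} [Group G] (α : MulAut G)

theorem prod_map_range_pow_apply_inv_mul_apply (n : ℕ) (g : G) :
    ((List.range n).map (fun i => (α ^ i) (g⁻¹ * α g))).prod = g⁻¹ * (α ^ n) g := by
  induction n with
  | zero => simp
  | succ n ih =>
    have hstep : (α ^ n) (g⁻¹ * α g) = ((α ^ n) g)⁻¹ * (α ^ (n + 1)) g := by
      rw [map_mul, map_inv, pow_succ, mul_apply]
    rw [List.range_succ, List.map_append, List.prod_append, ih]
    simp only [List.map_cons, List.map_nil, List.prod_cons, List.prod_nil, mul_one, hstep]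
    group

theorem injective_inv_mul_apply (hfpf : ∀ g : G, α g = g → g = 1) :
    Function.Injective fun g : G => g⁻¹ * α g := by
  intro a b hab
  replace hab : a⁻¹ * α a = b⁻¹ * α b := hab
  have hfix : α (b * a⁻¹) = b * a⁻¹ := by
    rw [map_mul, map_inv, mul_inv_eq_iff_eq_mul, mul_assoc, hab, mul_inv_cancel_left]
  exact (mul_inv_eq_one.mp (hfpf _ hfix)).symm

end MulAut

/-- If `α` is a fixed-point-free automorphism of a finite group `G` with `αⁿ = 1`,
then `α` is `n`-split: `g * α(g) * α²(g) ⋯ αⁿ⁻¹(g) = 1` for all `g`. -/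
theorem stmt_4 {G : Type*} [Group G] [Finite G] (α : MulAut G) (n : ℕ)
    (hfpf : ∀ g : G, α g = g → g = 1) (hord : α ^ n = 1) :
    ∀ g : G, ((List.range n).map (fun i => (α ^ i) g)).prod = 1 := by
  intro g
  obtain ⟨h, rfl⟩ := Finite.injective_iff_surjective.mp (α.injective_inv_mul_apply hfpf) g
  rw [α.prod_map_range_pow_apply_inv_mul_apply, hord, MulAut.one_apply, inv_mul_cancel]
end

section
/- Let G be a finite solvable group of derived length k with automorphism α, and suppose the integer polynomial f is an abelian identity of α, meaning f(ᾱ) vanishes on every abelian characteristic section of G. Then f(α)^k vanishes identically on G, where f(α) : G → G is the ordered evaluation map. -/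
/-- The ordered evaluation `f(α) : G → G`, `g ↦ ∏ᵢ αⁱ(g)^(aᵢ)` of a polynomial
`f = ∑ aᵢ xⁱ ∈ ℤ[x]` at an automorphism `α`. -/
def orderedEval {G : Type*} [Group G] (f : Polynomial ℤ) (α : MulAut G) (g : G) : G :=
  ((List.range (f.natDegree + 1)).map (fun i => ((α ^ i) g) ^ (f.coeff i))).prod

open scoped commutatorElement

theorem Function.iterate_mem_derivedSeries {G : Type*} [Group G] {φ : G → G}
    (hφ : ∀ n, ∀ g ∈ derivedSeries G n, φ g ∈ derivedSeries G (n + 1)) (n : ℕ) (g : G) :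
    φ^[n] g ∈ derivedSeries G n := by
  induction n with
  | zero => exact Subgroup.mem_top _
  | succ n ih => exact Function.iterate_succ_apply' φ n g ▸ hφ n _ ih

theorem stmt_8_general {G : Type*} [Group G] (k : ℕ) (α : MulAut G)
    (hsolv : derivedSeries G k = ⊥) (f : Polynomial ℤ)
    (habid : ∀ H K : Subgroup G, H.Characteristic → K.Characteristic → K ≤ H →
      (∀ h₁ ∈ H, ∀ h₂ ∈ H, ⁅h₁, h₂⁆ ∈ K) → ∀ h ∈ H, orderedEval f α h ∈ K) :
    ∀ g : G, (orderedEval f α)^[k] g = 1 := by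
  -- Each derived factor `G⁽ⁿ⁾ / G⁽ⁿ⁺¹⁾` is a characteristic abelian section.
  have hstep : ∀ n, ∀ g ∈ derivedSeries G n, orderedEval f α g ∈ derivedSeries G (n + 1) :=
    fun n => habid _ _ inferInstance inferInstance (derivedSeries_antitone G n.le_succ)
      fun _ h₁ _ h₂ => Subgroup.commutator_mem_commutator h₁ h₂
  intro g
  simpa [hsolv] using Function.iterate_mem_derivedSeries hstep k g

/-- If `G` is a finite solvable group of derived length `k` with automorphism `α`
and `f ∈ ℤ[x]` is an abelian identity of `α` (i.e. the ordered evaluation `f(α)` vanishes on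
every abelian characteristic section `H/K` of `G`), then `f(α)^[k]` vanishes identically on
`G`. -/
theorem stmt_8 {G : Type*} [Group G] [Finite G] (k : ℕ) (α : MulAut G)
    (hsolv : derivedSeries G k = ⊥) (f : Polynomial ℤ)
    (habid : ∀ H K : Subgroup G, H.Characteristic → K.Characteristic → K ≤ H →
      (∀ h₁ ∈ H, ∀ h₂ ∈ H, ⁅h₁, h₂⁆ ∈ K) → ∀ h ∈ H, orderedEval f α h ∈ K) :
    ∀ g : G, (orderedEval f α)^[k] g = 1 :=
  stmt_8_general k α hsolv f habid
end
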